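/- arXiv:2308.03583 — 2 statements merged into one kernel-verified Lean document; each statement's English description precedes it below -/
import Mathlib

section
/- The diagonal functor Δᵒᵖ → Δᵒᵖ × Δᵒᵖ from the opposite of the simplex category to its square is a final functor. -/
/-!
An object of `(op m, op n) / diag` is a pair of maps `⦋k⦌ ⟶ m`, `⦋k⦌ ⟶ n`, i.e. a simplex of
`Δ[m] × Δ[n]`, and precomposition with a map `⦋l⦌ ⟶ ⦋k⦌` is a morphism. Restricting to the
vertex `0` joins every object to a vertex `(i, j)`, and the edge from `(0, 0)` to `(i, j)`
joins that vertex to `(0, 0)`; so the comma category is connected.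
-/

open CategoryTheory Opposite Simplicial

namespace SimplexCategory

variable {m n : SimplexCategory}

abbrev diagSpan {a : SimplexCategory} (f : a ⟶ m) (g : a ⟶ n) :
    StructuredArrow (op m, op n) (Functor.diag SimplexCategoryᵒᵖ) :=
  StructuredArrow.mk (Y := op a) (f.op, g.op)

lemma zigzag_diagSpan_comp {a b : SimplexCategory} (h : b ⟶ a) (f : a ⟶ m) (g : a ⟶ n) :
    Zigzag (diagSpan f g) (diagSpan (h ≫ f) (h ≫ g)) :=
  Zigzag.of_hom (StructuredArrow.homMk' (diagSpan f g) h.op)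

lemma zigzag_diagSpan_const (i : Fin (m.len + 1)) (j : Fin (n.len + 1)) :
    Zigzag (diagSpan (const ⦋0⦌ m i) (const ⦋0⦌ n j))
      (diagSpan (const ⦋0⦌ m 0) (const ⦋0⦌ n 0)) :=
  let f : ⦋1⦌ ⟶ m := mkOfLe 0 i (Fin.zero_le i)
  let g : ⦋1⦌ ⟶ n := mkOfLe 0 j (Fin.zero_le j)
  (zigzag_diagSpan_comp (const ⦋0⦌ ⦋1⦌ 1) f g).symm.trans
    (zigzag_diagSpan_comp (const ⦋0⦌ ⦋1⦌ 0) f g)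

lemma zigzag_diagSpan_base {a : SimplexCategory} (f : a ⟶ m) (g : a ⟶ n) :
    Zigzag (diagSpan f g) (diagSpan (const ⦋0⦌ m 0) (const ⦋0⦌ n 0)) :=
  (zigzag_diagSpan_comp (const ⦋0⦌ a 0) f g).trans
    (zigzag_diagSpan_const (f.toOrderHom 0) (g.toOrderHom 0))

instance isConnected_structuredArrow_diag (m n : SimplexCategory) :
    IsConnected (StructuredArrow (op m, op n) (Functor.diag SimplexCategoryᵒᵖ)) :=
  have : Nonempty (StructuredArrow (op m, op n) (Functor.diag SimplexCategoryᵒᵖ)) :=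
    ⟨diagSpan (const ⦋0⦌ m 0) (const ⦋0⦌ n 0)⟩
  zigzag_isConnected fun T₁ T₂ =>
    (zigzag_diagSpan_base T₁.hom.1.unop T₁.hom.2.unop).trans
      (zigzag_diagSpan_base T₂.hom.1.unop T₂.hom.2.unop).symm

end SimplexCategory

/-- The diagonal functor `Δᵒᵖ → Δᵒᵖ × Δᵒᵖ` is final, i.e. `Δᵒᵖ` is sifted. -/
theorem stmt_3 : (Functor.diag (SimplexCategoryᵒᵖ)).Final :=
  ⟨fun ⟨⟨_⟩, ⟨_⟩⟩ => inferInstance⟩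
end

section
/- Let I, J, K, L be categories and suppose given functors p : I → K, w : I → J, v : K → L, q : J → L together with a natural transformation σ : v ∘ p ⟶ q ∘ w. If for every pair (j, k) ∈ J × K the induced map of sets colim_{i ∈ (w/j ×_I p\k)} * → Hom_L(q j, v k) — concretely, the map from the set of connected components of the category of triples (i, a : w i → j, b : k → p i) to Hom_L(q j, v k), sending (i, a, b) to v(b) composed with σ_i composed with q(a) — is a bijection, then for every functor f : K → X into a cocomplete category X, the canonical mate transformation Lan_w (f ∘ p) ⟶ (Lan_v f) ∘ q is an isomorphism. -/
/-! The hypothesis says that for every `g : v k ⟶ q j` the triples `(i, a, b)` with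
`v(b) ≫ σᵢ ≫ q(a) = g` form a nonempty connected category; this category is
`StructuredArrowRightwards g`, so the square is Guitart exact. Precomposing with `q` and
pasting with `σ` then turns the pointwise left Kan extension `Lan_v f` into a pointwise left
Kan extension of `f ∘ p` along `w`, and the mate compares it with `Lan_w (f ∘ p)`. -/

open CategoryTheory

universe u v

variable {I J K L : Type u} [Category.{u} I] [Category.{u} J] [Category.{u} K] [Category.{u} L]

/-- Given a lax square `σ : v ∘ p ⟶ q ∘ w`, the category of triples
`(i, a : w i ⟶ j, b : k ⟶ p i)`, used to compute the composite proarrow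
(companion of `w` composed with conjoint of `p`) at `(j, k)`. -/
structure ExactSqIndex (w : I ⥤ J) (p : I ⥤ K) (j : J) (k : K) where
  pt : I
  a : w.obj pt ⟶ j
  b : k ⟶ p.obj pt

instance {w : I ⥤ J} {p : I ⥤ K} {j : J} {k : K} : Category (ExactSqIndex w p j k) where
  Hom A B := { m : A.pt ⟶ B.pt // w.map m ≫ B.a = A.a ∧ A.b ≫ p.map m = B.b }
  id A := ⟨𝟙 A.pt, by simp⟩
  comp {A B C} m n := ⟨m.1 ≫ n.1, by
    obtain ⟨hm1, hm2⟩ := m.2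
    obtain ⟨hn1, hn2⟩ := n.2
    constructor
    · rw [Functor.map_comp, Category.assoc, hn1, hm1]
    · rw [Functor.map_comp, ← Category.assoc, hm2, hn2]⟩
  id_comp m := Subtype.ext (Category.id_comp m.1)
  comp_id m := Subtype.ext (Category.comp_id m.1)
  assoc m n o := Subtype.ext (Category.assoc m.1 n.1 o.1)

/-- The canonical comparison map sending a triple `(i, a, b)` to the composite
`v(b) ≫ σ_i ≫ q(a) : v k ⟶ q j`. -/
def ExactSqIndex.comparison {w : I ⥤ J} {p : I ⥤ K} {v : K ⥤ L} {q : J ⥤ L}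
    (σ : p ⋙ v ⟶ w ⋙ q) {j : J} {k : K} (A : ExactSqIndex w p j k) :
    v.obj k ⟶ q.obj j :=
  v.map A.b ≫ σ.app A.pt ≫ q.map A.a

section

variable {w : I ⥤ J} {p : I ⥤ K} {v : K ⥤ L} {q : J ⥤ L} (σ : p ⋙ v ⟶ w ⋙ q)

namespace ExactSqIndex

variable {j : J} {k : K}

lemma comparison_eq_of_hom {A B : ExactSqIndex w p j k} (m : A ⟶ B) :
    A.comparison σ = B.comparison σ := by
  obtain ⟨m, ha, hb⟩ := m
  have := σ.naturality m
  dsimp at this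
  simp only [comparison, ← ha, ← hb, Functor.map_comp, Category.assoc, reassoc_of% this]

abbrev toStructuredArrowRightwards (g : v.obj k ⟶ q.obj j) (A : ExactSqIndex w p j k)
    (hA : A.comparison σ = g) : (TwoSquare.mk p w v q σ).StructuredArrowRightwards g :=
  TwoSquare.StructuredArrowRightwards.mk _ g A.pt A.b A.a hA

def homToStructuredArrowRightwards {g : v.obj k ⟶ q.obj j} {A B : ExactSqIndex w p j k}
    (m : A ⟶ B) (hA : A.comparison σ = g) (hB : B.comparison σ = g) :
    toStructuredArrowRightwards σ g A hA ⟶ toStructuredArrowRightwards σ g B hB :=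
  StructuredArrow.homMk (CostructuredArrow.homMk m.1 m.2.1) (by ext; exact m.2.2)

lemma zigzag_toStructuredArrowRightwards {g : v.obj k ⟶ q.obj j}
    {A B : ExactSqIndex w p j k} (hAB : Zigzag A B) (hA : A.comparison σ = g)
    (hB : B.comparison σ = g) :
    Zigzag (toStructuredArrowRightwards σ g A hA) (toStructuredArrowRightwards σ g B hB) := by
  induction hAB with
  | refl => rfl
  | @tail B C _ hBC ih =>
    have hB' : B.comparison σ = g := by
      rcases hBC with ⟨⟨m⟩⟩ | ⟨⟨m⟩⟩
      · rw [comparison_eq_of_hom σ m, hB]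
      · rw [← comparison_eq_of_hom σ m, hB]
    refine (ih hB').trans (Zigzag.of_zag ?_)
    rcases hBC with ⟨⟨m⟩⟩ | ⟨⟨m⟩⟩
    · exact Or.inl ⟨homToStructuredArrowRightwards σ m hB' hB⟩
    · exact Or.inr ⟨homToStructuredArrowRightwards σ m hB hB'⟩

end ExactSqIndex

open ExactSqIndex in
lemma isConnected_structuredArrowRightwards {j : J} {k : K} (g : v.obj k ⟶ q.obj j)
    (hg : ∃ A : ExactSqIndex w p j k, A.comparison σ = g)
    (hzigzag : ∀ A B : ExactSqIndex w p j k, A.comparison σ = B.comparison σ → Zigzag A B) :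
    IsConnected ((TwoSquare.mk p w v q σ).StructuredArrowRightwards g) := by
  obtain ⟨A, hA⟩ := hg
  have : Nonempty ((TwoSquare.mk p w v q σ).StructuredArrowRightwards g) :=
    ⟨toStructuredArrowRightwards σ g A hA⟩
  refine zigzag_isConnected fun S T => ?_
  obtain ⟨i, b, a, hS, rfl⟩ := TwoSquare.StructuredArrowRightwards.mk_surjective S
  obtain ⟨i', b', a', hT, rfl⟩ := TwoSquare.StructuredArrowRightwards.mk_surjective T
  exact zigzag_toStructuredArrowRightwards σ (A := ⟨i, a, b⟩) (B := ⟨i', a', b'⟩)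
    (hzigzag _ _ (hS.trans hT.symm)) hS hT

lemma guitartExact_of_comparison_bijective
    (hexact : ∀ (j : J) (k : K),
      (Function.Surjective (fun A : ExactSqIndex w p j k => A.comparison σ)) ∧
      (∀ A B : ExactSqIndex w p j k, A.comparison σ = B.comparison σ ↔ Zigzag A B)) :
    (TwoSquare.mk p w v q σ).GuitartExact :=
  (TwoSquare.guitartExact_iff_isConnected_rightwards _).2 fun {k j} g =>
    isConnected_structuredArrowRightwards σ g ((hexact j k).1 g)
      fun A B => ((hexact j k).2 A B).1

end

/-- Beck–Chevalley for exact squares: given a lax square `σ : v ∘ p ⟶ q ∘ w` such that for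
all `(j, k)` the induced map from the connected components of the category of triples
`(i, a : w i ⟶ j, b : k ⟶ p i)` to `Hom_L(v k, q j)`, `(i,a,b) ↦ v(b) ≫ σᵢ ≫ q(a)`,
is a bijection (i.e. it is surjective, and two triples have equal composites precisely
when they are connected by a zigzag), then for every functor `f : K ⥤ X` into a
cocomplete category `X` the mate `Lan_w (f ∘ p) ⟶ (Lan_v f) ∘ q` is an isomorphism. -/
theorem stmt_19 (w : I ⥤ J) (p : I ⥤ K) (v : K ⥤ L) (q : J ⥤ L)
    (σ : p ⋙ v ⟶ w ⋙ q)
    (hexact : ∀ (j : J) (k : K),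
      (Function.Surjective (fun A : ExactSqIndex w p j k => A.comparison σ)) ∧
      (∀ A B : ExactSqIndex w p j k, A.comparison σ = B.comparison σ ↔ Zigzag A B))
    {X : Type v} [Category.{u} X] [Limits.HasColimits X] (f : K ⥤ X) :
    IsIso ((w.leftKanExtension (p ⋙ f)).descOfIsLeftKanExtension
      (w.leftKanExtensionUnit (p ⋙ f)) (q ⋙ v.leftKanExtension f)
      (Functor.whiskerLeft p (v.leftKanExtensionUnit f) ≫ (p.associator v (v.leftKanExtension f)).inv ≫
        Functor.whiskerRight σ (v.leftKanExtension f) ≫ (w.associator q (v.leftKanExtension f)).hom)) := by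
  have := guitartExact_of_comparison_bijective σ hexact
  have hpointwise := (Functor.isPointwiseLeftKanExtensionOfIsLeftKanExtension
    (v.leftKanExtension f) (v.leftKanExtensionUnit f)).compTwoSquare (TwoSquare.mk p w v q σ)
  exact (Functor.isLeftKanExtension_iff_isIso _ (w.leftKanExtensionUnit (p ⋙ f)) _
    (Functor.descOfIsLeftKanExtension_fac _ _ _ _)).mp hpointwise.isLeftKanExtension
end
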